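/- arXiv:1810.00576 — 4 statements merged into one kernel-verified Lean document; each statement's English description precedes it below -/
import Mathlib

section
/- Let σ, ζ, ε be real symmetric n×n matrices with σ+ζ and σ−ζ positive definite. Then the 2n×2n real block matrix B = [[(σ+ζ)⁻¹, (σ+ζ)⁻¹ε], [ε(σ+ζ)⁻¹, σ−ζ+ε(σ+ζ)⁻¹ε]] is symmetric and positive definite. -/
/-!
With `A = (σ + ζ)⁻¹` and `S = σ - ζ` the matrix is `Lᴴ (A ⊕ S) L` for the shear
`L = [[1, ε], [0, 1]]`. Equivalently, its Schur complement with respect to the invertible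
block `A` is `S`, so it is positive definite as soon as `A` and `S` are.
-/

open Matrix

namespace Matrix.PosDef

variable {m n : Type*} [Fintype m] [Fintype n] [DecidableEq m]

theorem fromBlocks₁₁_of_schur {R : Type*} [CommRing R] [PartialOrder R] [StarRing R]
    [StarOrderedRing R] {A : Matrix m m R} {B : Matrix m n R} {D : Matrix n n R}
    (hA : A.PosDef) [Invertible A] (hS : (D - Bᴴ * A⁻¹ * B).PosDef) :
    (fromBlocks A B Bᴴ D).PosDef := by
  refine of_dotProduct_mulVec_pos ((IsHermitian.fromBlocks₁₁ B D hA.1).2 hS.1) fun x hx => ?_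
  rw [dotProduct_mulVec, ← Sum.elim_comp_inl_inr x, schur_complement_eq₁₁ B D _ _ hA.1,
    ← dotProduct_mulVec, ← dotProduct_mulVec]
  by_cases hy : x ∘ Sum.inr = 0
  · have hxl : x ∘ Sum.inl ≠ 0 := fun hxl => hx <| by
      rw [← Sum.elim_comp_inl_inr x, hxl, hy]; ext (i | i) <;> rfl
    rw [hy, mulVec_zero, add_zero, mulVec_zero, dotProduct_zero, add_zero]
    exact hA.dotProduct_mulVec_pos hxl
  · exact add_pos_of_nonneg_of_pos (hA.posSemidef.dotProduct_mulVec_nonneg _)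
      (hS.dotProduct_mulVec_pos hy)

theorem fromBlocks_shear {K : Type*} [Field K] [PartialOrder K] [StarRing K] [StarOrderedRing K]
    {A : Matrix m m K} {S : Matrix n n K} (E : Matrix m n K) (hA : A.PosDef) (hS : S.PosDef) :
    (fromBlocks A (A * E) (Eᴴ * A) (S + Eᴴ * A * E)).PosDef := by
  have : Invertible A := hA.isUnit.invertible
  have hschur : S + Eᴴ * A * E - (A * E)ᴴ * A⁻¹ * (A * E) = S := by
    rw [conjTranspose_mul, hA.1.eq, Matrix.mul_assoc, Matrix.mul_assoc,
      inv_mul_cancel_left_of_invertible, Matrix.mul_assoc, add_sub_cancel_right]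
  have h := fromBlocks₁₁_of_schur (B := A * E) hA (hschur ▸ hS)
  rwa [conjTranspose_mul, hA.1.eq] at h

end Matrix.PosDef

theorem cherkaev_gibiansky_posDef_general (n : ℕ)
    (σ ζ ε : Matrix (Fin n) (Fin n) ℝ)
    (hε : ε.IsSymm)
    (hpos₁ : (σ + ζ).PosDef) (hpos₂ : (σ - ζ).PosDef) :
    (Matrix.fromBlocks (σ + ζ)⁻¹ ((σ + ζ)⁻¹ * ε)
      (ε * (σ + ζ)⁻¹) (σ - ζ + ε * (σ + ζ)⁻¹ * ε)).IsSymm ∧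
    (Matrix.fromBlocks (σ + ζ)⁻¹ ((σ + ζ)⁻¹ * ε)
      (ε * (σ + ζ)⁻¹) (σ - ζ + ε * (σ + ζ)⁻¹ * ε)).PosDef := by
  have hεH : εᴴ = ε := by rw [conjTranspose_eq_transpose_of_trivial, hε]
  have hpos := hεH ▸ hpos₁.inv.fromBlocks_shear ε hpos₂
  exact ⟨isHermitian_iff_isSymm.1 hpos.1, hpos⟩

/-- The Cherkaev–Gibiansky block matrix associated to a complex admittivity
`γ(∇u) = (σ+iε)∇u + ζ conj(∇u)` is symmetric and positive definite, provided
`σ+ζ` and `σ-ζ` are (symmetric) positive definite. -/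
theorem cherkaev_gibiansky_posDef (n : ℕ)
    (σ ζ ε : Matrix (Fin n) (Fin n) ℝ)
    (hσ : σ.IsSymm) (hζ : ζ.IsSymm) (hε : ε.IsSymm)
    (hpos₁ : (σ + ζ).PosDef) (hpos₂ : (σ - ζ).PosDef) :
    (Matrix.fromBlocks (σ + ζ)⁻¹ ((σ + ζ)⁻¹ * ε)
      (ε * (σ + ζ)⁻¹) (σ - ζ + ε * (σ + ζ)⁻¹ * ε)).IsSymm ∧
    (Matrix.fromBlocks (σ + ζ)⁻¹ ((σ + ζ)⁻¹ * ε)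
      (ε * (σ + ζ)⁻¹) (σ - ζ + ε * (σ + ζ)⁻¹ * ε)).PosDef :=
  cherkaev_gibiansky_posDef_general n σ ζ ε hε hpos₁ hpos₂
end

section
/- Let σ, ζ, ε be real symmetric n×n matrices with σ+ζ invertible. For vectors E, J ∈ ℂⁿ (identified with pairs of real vectors via real and imaginary parts), if (Re J, Im J)ᵀ = [[σ+ζ, −ε],[ε, σ−ζ]] (Re E, Im E)ᵀ, then (Re E, Im J)ᵀ = [[(σ+ζ)⁻¹, (σ+ζ)⁻¹ε],[ε(σ+ζ)⁻¹, σ−ζ+ε(σ+ζ)⁻¹ε]] (Re J, Im E)ᵀ. -/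
/-- The Cherkaev–Gibiansky partial inversion of the current-voltage relation
`J = (σ+iε)E + ζ conj(E)`, written in real/imaginary parts. -/
theorem cherkaev_gibiansky_inversion (n : ℕ)
    (σ ζ ε : Matrix (Fin n) (Fin n) ℝ)
    (hσ : σ.IsSymm) (hζ : ζ.IsSymm) (hε : ε.IsSymm)
    (hinv : IsUnit (σ + ζ))
    (E J : Fin n → ℂ)
    (h : (Sum.elim (fun i => (J i).re) (fun i => (J i).im)) =
      (Matrix.fromBlocks (σ + ζ) (-ε) ε (σ - ζ)).mulVec
        (Sum.elim (fun i => (E i).re) (fun i => (E i).im))) :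
    (Sum.elim (fun i => (E i).re) (fun i => (J i).im)) =
      (Matrix.fromBlocks (σ + ζ)⁻¹ ((σ + ζ)⁻¹ * ε)
        (ε * (σ + ζ)⁻¹) (σ - ζ + ε * (σ + ζ)⁻¹ * ε)).mulVec
        (Sum.elim (fun i => (J i).re) (fun i => (E i).im)) := by
  set Er := fun i => (E i).re
  set Ei := fun i => (E i).im
  set Jr := fun i => (J i).re
  set Ji := fun i => (J i).im
  rw [Matrix.fromBlocks_mulVec] at h ⊢
  have hdet : IsUnit (σ + ζ).det := (Matrix.isUnit_iff_isUnit_det _).mp hinv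
  have hAinv : (σ + ζ)⁻¹ * (σ + ζ) = 1 := Matrix.nonsing_inv_mul _ hdet
  have h1 : Jr = (σ + ζ).mulVec Er + (-ε).mulVec Ei :=
    funext fun i => congrFun h (Sum.inl i)
  have h2 : Ji = ε.mulVec Er + (σ - ζ).mulVec Ei :=
    funext fun i => congrFun h (Sum.inr i)
  have hEr : Er = (σ + ζ)⁻¹.mulVec Jr + ((σ + ζ)⁻¹ * ε).mulVec Ei := by
    rw [h1]
    simp only [Matrix.mulVec_add, Matrix.mulVec_mulVec, hAinv, Matrix.one_mulVec,
      Matrix.mul_neg, Matrix.neg_mulVec, Matrix.mulVec_neg]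
    abel
  refine funext fun i => ?_
  cases i with
  | inl i => exact congrFun hEr i
  | inr i =>
    have : Ji = (ε * (σ + ζ)⁻¹).mulVec Jr + (σ - ζ + ε * (σ + ζ)⁻¹ * ε).mulVec Ei := by
      rw [h2, hEr]
      simp only [Matrix.mulVec_add, Matrix.add_mulVec, Matrix.mulVec_mulVec, Matrix.mul_assoc]
      abel
    exact congrFun this i
end

section
/- Let M, N, σ₀, ε₀, ε₁ be real symmetric n×n matrices with σ₀ positive definite, and suppose βI ≤ M and βI ≤ N for some β > 0, and ε₁, M, N, σ₀⁻¹, ε₀ have operator norms bounded by a constant Λ. Then there exists δ > 0 depending only on β, Λ such that if ‖ε₁−ε₀‖ ≤ δ, the 2n×2n matrix C + D is positive definite, where C = [[M, Mε₁],[ε₁M, N+ε₁Mε₁]] and D = [[0, σ₀⁻¹(ε₁−ε₀)],[(ε₁−ε₀)σ₀⁻¹, (ε₁−ε₀)σ₀⁻¹ε₁ + ε₀σ₀⁻¹(ε₁−ε₀)]]. -/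
open Matrix
open scoped Matrix.Norms.L2Operator

/-! With `z = x + ε₁ y`, the quadratic form of `C` at `(x, y)` is `z ⬝ M z + y ⬝ N y`, which is at
least `β (|z|² + |y|²)`; since `|x| ≤ |z| + Λ |y|`, this makes `C` coercive with constant
`c = β / (2 (1 + Λ²))`. Every block of `D` carries a factor `ε₁ - ε₀`, so its quadratic form is
at most `(2Λ + 2Λ²) δ |X|²` in absolute value, which is below `c |X|² / 2` for small `δ`. -/

namespace Matrix

open WithLp

lemma norm_toLp_sq {n : Type*} [Fintype n] (x : n → ℝ) : ‖toLp 2 x‖ ^ 2 = x ⬝ᵥ x := by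
  rw [← real_inner_self_eq_norm_sq, EuclideanSpace.inner_toLp_toLp, star_trivial]

lemma dotProduct_self_nonneg {n : Type*} [Fintype n] (x : n → ℝ) : 0 ≤ x ⬝ᵥ x :=
  norm_toLp_sq x ▸ sq_nonneg _

lemma abs_dotProduct_mulVec_le {m n : Type*} [Fintype m] [Fintype n] [DecidableEq n]
    (A : Matrix m n ℝ) (u : m → ℝ) (v : n → ℝ) :
    |u ⬝ᵥ A *ᵥ v| ≤ ‖A‖ * ‖toLp 2 u‖ * ‖toLp 2 v‖ := by
  have hCS := abs_real_inner_le_norm (toLp 2 u) (toLp 2 (A *ᵥ v))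
  rw [EuclideanSpace.inner_toLp_toLp, star_trivial, dotProduct_comm] at hCS
  calc |u ⬝ᵥ A *ᵥ v| ≤ ‖toLp 2 u‖ * ‖toLp 2 (A *ᵥ v)‖ := hCS
    _ ≤ ‖toLp 2 u‖ * (‖A‖ * ‖toLp 2 v‖) := by gcongr; exact A.l2_opNorm_mulVec (toLp 2 v)
    _ = ‖A‖ * ‖toLp 2 u‖ * ‖toLp 2 v‖ := by ring

lemma IsSymm.posDef_of_le_dotProduct_mulVec {ι : Type*} [Fintype ι] {A : Matrix ι ι ℝ}
    (hA : A.IsSymm) {c : ℝ} (hc : 0 < c) (hAc : ∀ x, c * (x ⬝ᵥ x) ≤ x ⬝ᵥ A *ᵥ x) :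
    A.PosDef := by
  refine .of_dotProduct_mulVec_pos (isHermitian_iff_isSymm.mpr hA) fun x hx ↦ ?_
  rw [star_trivial]
  have hxx : 0 < x ⬝ᵥ x := by simpa only [star_trivial] using dotProduct_star_self_pos_iff.mpr hx
  exact (mul_pos hc hxx).trans_le (hAc x)

section Blocks

variable {m n : Type*} [Fintype m] [Fintype n]

lemma sumElim_dotProduct_fromBlocks_mulVec {R : Type*} [CommSemiring R]
    (A : Matrix m m R) (B : Matrix m n R) (C : Matrix n m R) (D : Matrix n n R)
    (x : m → R) (y : n → R) :
    Sum.elim x y ⬝ᵥ fromBlocks A B C D *ᵥ Sum.elim x y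
      = x ⬝ᵥ A *ᵥ x + x ⬝ᵥ B *ᵥ y + (y ⬝ᵥ C *ᵥ x + y ⬝ᵥ D *ᵥ y) := by
  rw [fromBlocks_mulVec, sumElim_dotProduct_sumElim, Sum.elim_comp_inl, Sum.elim_comp_inr,
    dotProduct_add, dotProduct_add]

lemma abs_sumElim_dotProduct_fromBlocks_mulVec_le [DecidableEq m] [DecidableEq n]
    (A : Matrix m m ℝ) (B : Matrix m n ℝ) (C : Matrix n m ℝ) (D : Matrix n n ℝ)
    (x : m → ℝ) (y : n → ℝ) :
    |Sum.elim x y ⬝ᵥ fromBlocks A B C D *ᵥ Sum.elim x y|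
      ≤ (‖A‖ + ‖B‖ + ‖C‖ + ‖D‖) * (x ⬝ᵥ x + y ⬝ᵥ y) := by
  set a := ‖toLp 2 x‖
  set b := ‖toLp 2 y‖
  have hab : a * b ≤ a ^ 2 + b ^ 2 := by nlinarith [sq_nonneg (a - b)]
  have haa : a * a ≤ a ^ 2 + b ^ 2 := by nlinarith [sq_nonneg b]
  have hba : b * a ≤ a ^ 2 + b ^ 2 := by linarith
  have hbb : b * b ≤ a ^ 2 + b ^ 2 := by nlinarith [sq_nonneg a]
  rw [sumElim_dotProduct_fromBlocks_mulVec, ← norm_toLp_sq x, ← norm_toLp_sq y]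
  calc _ ≤ ‖A‖ * a * a + ‖B‖ * a * b + (‖C‖ * b * a + ‖D‖ * b * b) :=
        (abs_add_le _ _).trans <| add_le_add
          ((abs_add_le _ _).trans <| add_le_add (abs_dotProduct_mulVec_le ..)
            (abs_dotProduct_mulVec_le ..))
          ((abs_add_le _ _).trans <| add_le_add (abs_dotProduct_mulVec_le ..)
            (abs_dotProduct_mulVec_le ..))
    _ = ‖A‖ * (a * a) + ‖B‖ * (a * b) + (‖C‖ * (b * a) + ‖D‖ * (b * b)) := by ring
    _ ≤ ‖A‖ * (a ^ 2 + b ^ 2) + ‖B‖ * (a ^ 2 + b ^ 2)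
          + (‖C‖ * (a ^ 2 + b ^ 2) + ‖D‖ * (a ^ 2 + b ^ 2)) := by gcongr
    _ = _ := by ring

lemma sumElim_dotProduct_fromBlocks_mulVec_shear {R : Type*} [CommSemiring R]
    (M : Matrix m m R) (N : Matrix n n R) (ε : Matrix m n R) (x : m → R) (y : n → R) :
    Sum.elim x y ⬝ᵥ fromBlocks M (M * ε) (εᵀ * M) (N + εᵀ * M * ε) *ᵥ Sum.elim x y
      = (x + ε *ᵥ y) ⬝ᵥ M *ᵥ (x + ε *ᵥ y) + y ⬝ᵥ N *ᵥ y := by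
  have htr : ∀ w, y ⬝ᵥ εᵀ *ᵥ w = (ε *ᵥ y) ⬝ᵥ w := fun w ↦ by
    rw [dotProduct_mulVec, vecMul_transpose]
  simp only [sumElim_dotProduct_fromBlocks_mulVec, ← mulVec_mulVec, add_mulVec, mulVec_add,
    dotProduct_add, add_dotProduct, htr]
  ring

lemma dotProduct_self_add_le_of_norm_le [DecidableEq n] {ε : Matrix m n ℝ} {Λ : ℝ}
    (hε : ‖ε‖ ≤ Λ) (x : m → ℝ) (y : n → ℝ) :
    x ⬝ᵥ x + y ⬝ᵥ y ≤ 2 * (1 + Λ ^ 2) * ((x + ε *ᵥ y) ⬝ᵥ (x + ε *ᵥ y) + y ⬝ᵥ y) := by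
  simp only [← norm_toLp_sq]
  set a := ‖toLp 2 x‖
  set b := ‖toLp 2 y‖
  set c := ‖toLp 2 (x + ε *ᵥ y)‖
  have hεy : ‖toLp 2 (ε *ᵥ y)‖ ≤ Λ * b :=
    (ε.l2_opNorm_mulVec (toLp 2 y)).trans (by gcongr)
  have hac : a ≤ c + Λ * b := by
    have : toLp 2 x = toLp 2 (x + ε *ᵥ y) - toLp 2 (ε *ᵥ y) := by simp
    linarith [this ▸ norm_sub_le (toLp 2 (x + ε *ᵥ y)) (toLp 2 (ε *ᵥ y))]
  have ha2 : a ^ 2 ≤ (c + Λ * b) ^ 2 := pow_le_pow_left₀ (norm_nonneg _) hac 2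
  nlinarith [sq_nonneg (c - Λ * b), sq_nonneg (Λ * c), sq_nonneg b, sq_nonneg c]

lemma le_sumElim_dotProduct_fromBlocks_mulVec_shear [DecidableEq n]
    {M : Matrix m m ℝ} {N : Matrix n n ℝ} {ε : Matrix m n ℝ} {β Λ : ℝ} (hβ : 0 ≤ β)
    (hM : ∀ x, β * (x ⬝ᵥ x) ≤ x ⬝ᵥ M *ᵥ x) (hN : ∀ y, β * (y ⬝ᵥ y) ≤ y ⬝ᵥ N *ᵥ y)
    (hε : ‖ε‖ ≤ Λ) (x : m → ℝ) (y : n → ℝ) :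
    β / (2 * (1 + Λ ^ 2)) * (x ⬝ᵥ x + y ⬝ᵥ y)
      ≤ Sum.elim x y ⬝ᵥ fromBlocks M (M * ε) (εᵀ * M) (N + εᵀ * M * ε) *ᵥ Sum.elim x y := by
  set z := x + ε *ᵥ y
  rw [sumElim_dotProduct_fromBlocks_mulVec_shear]
  calc _ ≤ β / (2 * (1 + Λ ^ 2)) * (2 * (1 + Λ ^ 2) * (z ⬝ᵥ z + y ⬝ᵥ y)) := by
        gcongr; exact dotProduct_self_add_le_of_norm_le hε x y
    _ = β * (z ⬝ᵥ z) + β * (y ⬝ᵥ y) := by field_simp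
    _ ≤ _ := add_le_add (hM z) (hN y)

end Blocks

lemma isSymm_fromBlocks_shear {m n R : Type*} [Fintype m] [CommSemiring R] {M : Matrix m m R}
    {N : Matrix n n R} (hM : M.IsSymm) (hN : N.IsSymm) (ε : Matrix m n R) :
    (fromBlocks M (M * ε) (εᵀ * M) (N + εᵀ * M * ε)).IsSymm :=
  hM.fromBlocks (by rw [transpose_mul, hM.eq]) <|
    hN.add (by rw [IsSymm, transpose_mul, transpose_mul, transpose_transpose, hM.eq,
      Matrix.mul_assoc])

lemma isSymm_fromBlocks_perturbation {n R : Type*} [Fintype n] [CommRing R]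
    {S ε₀ ε₁ : Matrix n n R} (hS : S.IsSymm) (hε₀ : ε₀.IsSymm) (hε₁ : ε₁.IsSymm) :
    (fromBlocks 0 (S * (ε₁ - ε₀)) ((ε₁ - ε₀) * S)
      ((ε₁ - ε₀) * S * ε₁ + ε₀ * S * (ε₁ - ε₀))).IsSymm := by
  refine isSymm_zero.fromBlocks (by rw [transpose_mul, transpose_sub, hS.eq, hε₀.eq, hε₁.eq]) ?_
  rw [IsSymm, transpose_add, transpose_mul, transpose_mul, transpose_mul, transpose_mul,
    transpose_sub, hS.eq, hε₀.eq, hε₁.eq]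
  noncomm_ring

lemma abs_sumElim_dotProduct_fromBlocks_perturbation_le {n : Type*} [Fintype n] [DecidableEq n]
    {S ε₀ ε₁ : Matrix n n ℝ} {Λ δ : ℝ} (hS : ‖S‖ ≤ Λ) (hε₀ : ‖ε₀‖ ≤ Λ) (hε₁ : ‖ε₁‖ ≤ Λ)
    (hδ : ‖ε₁ - ε₀‖ ≤ δ) (x y : n → ℝ) :
    |Sum.elim x y ⬝ᵥ fromBlocks 0 (S * (ε₁ - ε₀)) ((ε₁ - ε₀) * S)
        ((ε₁ - ε₀) * S * ε₁ + ε₀ * S * (ε₁ - ε₀)) *ᵥ Sum.elim x y|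
      ≤ (2 * Λ + 2 * Λ ^ 2) * δ * (x ⬝ᵥ x + y ⬝ᵥ y) := by
  refine (abs_sumElim_dotProduct_fromBlocks_mulVec_le ..).trans <|
    mul_le_mul_of_nonneg_right ?_ (add_nonneg (dotProduct_self_nonneg x) (dotProduct_self_nonneg y))
  have h1 := norm_mul_le_of_le hS hδ
  have h2 := norm_mul_le_of_le hδ hS
  have h3 := norm_mul_le_of_le h2 hε₁
  have h4 := norm_mul_le_of_le (norm_mul_le_of_le hε₀ hS) hδ
  have h5 := norm_add_le ((ε₁ - ε₀) * S * ε₁) (ε₀ * S * (ε₁ - ε₀))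
  rw [norm_zero]
  linarith

end Matrix

/-- Perturbation positivity: if `βI ≤ M`, `βI ≤ N`, all matrices have operator norms
bounded by `Λ`, then there is `δ > 0` depending only on `β, Λ` such that whenever
`‖ε₁ − ε₀‖ ≤ δ`, the matrix `C + D` is positive definite. -/
theorem C_plus_D_posDef (β Λ : ℝ) (hβ : 0 < β) :
    ∃ δ > 0, ∀ (n : ℕ) (M N σ₀ ε₀ ε₁ : Matrix (Fin n) (Fin n) ℝ),
      M.IsSymm → N.IsSymm → ε₀.IsSymm → ε₁.IsSymm → σ₀.PosDef →
      (∀ x : Fin n → ℝ, β * (x ⬝ᵥ x) ≤ x ⬝ᵥ M.mulVec x) →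
      (∀ x : Fin n → ℝ, β * (x ⬝ᵥ x) ≤ x ⬝ᵥ N.mulVec x) →
      ‖ε₁‖ ≤ Λ → ‖M‖ ≤ Λ → ‖N‖ ≤ Λ → ‖σ₀⁻¹‖ ≤ Λ → ‖ε₀‖ ≤ Λ →
      ‖ε₁ - ε₀‖ ≤ δ →
      (Matrix.fromBlocks M (M * ε₁) (ε₁ * M) (N + ε₁ * M * ε₁)
        + Matrix.fromBlocks 0 (σ₀⁻¹ * (ε₁ - ε₀)) ((ε₁ - ε₀) * σ₀⁻¹)
            ((ε₁ - ε₀) * σ₀⁻¹ * ε₁ + ε₀ * σ₀⁻¹ * (ε₁ - ε₀))).PosDef := by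
  set c := β / (2 * (1 + Λ ^ 2))
  set δ := c / (6 * (1 + Λ ^ 2))
  have hδc : (2 * Λ + 2 * Λ ^ 2) * δ ≤ c / 2 :=
    calc _ ≤ 3 * (1 + Λ ^ 2) * δ := by gcongr; nlinarith [sq_nonneg (Λ - 1)]
      _ = c / 2 := by simp only [δ]; field_simp; ring
  refine ⟨δ, by positivity, ?_⟩
  intro n M N σ₀ ε₀ ε₁ hM hN hε₀ hε₁ hσ₀ hMβ hNβ hε₁Λ _ _ hσΛ hε₀Λ hδ
  have hC := le_sumElim_dotProduct_fromBlocks_mulVec_shear hβ.le hMβ hNβ hε₁Λ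
  have hCsymm := isSymm_fromBlocks_shear hM hN ε₁
  rw [hε₁.eq] at hC hCsymm
  have hσsymm : σ₀⁻¹.IsSymm := (isHermitian_iff_isSymm.mp hσ₀.1).inv
  have hDsymm := isSymm_fromBlocks_perturbation hσsymm hε₀ hε₁
  refine (hCsymm.add hDsymm).posDef_of_le_dotProduct_mulVec (c := c / 2) (by positivity)
    fun X ↦ ?_
  obtain ⟨x, y, rfl⟩ : ∃ x y, X = Sum.elim x y :=
    ⟨X ∘ Sum.inl, X ∘ Sum.inr, (Sum.elim_comp_inl_inr X).symm⟩
  have hD := abs_le.mp (abs_sumElim_dotProduct_fromBlocks_perturbation_le hσΛ hε₀Λ hε₁Λ hδ x y)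
  have hxy := add_nonneg (dotProduct_self_nonneg x) (dotProduct_self_nonneg y)
  rw [add_mulVec, dotProduct_add, sumElim_dotProduct_sumElim]
  linarith [hC x y, mul_le_mul_of_nonneg_right hδc hxy]
end

section
/- Let B₀, B₁ : Ω → Sym(2n,ℝ) be measurable with B₁ positive semidefinite a.e. and B₁ = B₀ outside D ⊂ Ω. Let v₀, v₁ ∈ L²(Ω;ℝ²ⁿ) satisfy ∫_Ω B₀v₀·v₀ − 2∫_Ω B₀v₀·v₁ + ∫_Ω B₁v₁·v₁ = W and ∫_Ω B₁v₁·v₁ − 2∫_Ω B₁v₁·v₀ + ∫_Ω B₀v₀·v₀ = −W for some real W. Then W = −∫_Ω B₁(v₀−v₁)·(v₀−v₁) + ∫_D (B₁−B₀)v₀·v₀, and consequently W ≤ ∫_D (B₁−B₀)v₀·v₀; if moreover (B₁−B₀)(x) ≤ Λ I a.e. on D, then W ≤ Λ ∫_D |v₀|². -/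
/-!
Since `B₁` is symmetric, `∫_Ω B₁(v₀−v₁)·(v₀−v₁) = ∫_Ω B₁v₀·v₀ − 2∫_Ω B₁v₀·v₁ + ∫_Ω B₁v₁·v₁`,
and since `B₁ = B₀` off `D`, `∫_D (B₁−B₀)v₀·v₀ = ∫_Ω B₁v₀·v₀ − ∫_Ω B₀v₀·v₀`. Substituting both,
the identity for `W` becomes the second integration-by-parts identity. The two bounds follow
because `B₁` is positive semidefinite and `B₁ − B₀ ≤ Λ I` on `D`.
-/

open MeasureTheory Matrix

namespace Matrix

variable {ι R : Type*} [Fintype ι] [CommRing R] {A : Matrix ι ι R}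

theorem IsSymm.dotProduct_mulVec_comm (hA : A.IsSymm) (u w : ι → R) :
    u ⬝ᵥ A *ᵥ w = w ⬝ᵥ A *ᵥ u := by
  simpa only [hA.eq] using dotProduct_transpose_mulVec A u w

theorem IsSymm.dotProduct_mulVec_sub (hA : A.IsSymm) (u w : ι → R) :
    (u - w) ⬝ᵥ A *ᵥ (u - w) = u ⬝ᵥ A *ᵥ u - 2 * (u ⬝ᵥ A *ᵥ w) + w ⬝ᵥ A *ᵥ w := by
  simp only [mulVec_sub, sub_dotProduct, dotProduct_sub, hA.dotProduct_mulVec_comm w u]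
  ring

end Matrix

section QuadraticFormIntegrals

variable {α ι : Type*} [MeasurableSpace α] {μ : Measure α} [Fintype ι] {s t : Set α}
  {A B : α → Matrix ι ι ℝ} {u w : α → ι → ℝ}

theorem setIntegral_dotProduct_mulVec_sub (hA : ∀ x, (A x).IsSymm)
    (huu : IntegrableOn (fun x => u x ⬝ᵥ A x *ᵥ u x) s μ)
    (huw : IntegrableOn (fun x => u x ⬝ᵥ A x *ᵥ w x) s μ)
    (hww : IntegrableOn (fun x => w x ⬝ᵥ A x *ᵥ w x) s μ) :
    ∫ x in s, (u x - w x) ⬝ᵥ A x *ᵥ (u x - w x) ∂μ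
      = (∫ x in s, u x ⬝ᵥ A x *ᵥ u x ∂μ) - 2 * (∫ x in s, u x ⬝ᵥ A x *ᵥ w x ∂μ)
        + ∫ x in s, w x ⬝ᵥ A x *ᵥ w x ∂μ := by
  simp only [fun x => (hA x).dotProduct_mulVec_sub (u x) (w x)]
  rw [integral_add _ hww, integral_sub huu (huw.const_mul 2), integral_const_mul]
  exact huu.sub (huw.const_mul 2)

theorem setIntegral_dotProduct_sub_mulVec_of_eqOn_sdiff (ht : MeasurableSet t) (hst : s ⊆ t)
    (hAB : ∀ x ∈ t \ s, A x = B x)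
    (hA : IntegrableOn (fun x => u x ⬝ᵥ A x *ᵥ u x) t μ)
    (hB : IntegrableOn (fun x => u x ⬝ᵥ B x *ᵥ u x) t μ) :
    ∫ x in s, u x ⬝ᵥ (A x - B x) *ᵥ u x ∂μ
      = (∫ x in t, u x ⬝ᵥ A x *ᵥ u x ∂μ) - ∫ x in t, u x ⬝ᵥ B x *ᵥ u x ∂μ := by
  rw [← integral_sub hA hB, ← setIntegral_eq_of_subset_of_forall_sdiff_eq_zero ht hst]
  · simp only [sub_mulVec, dotProduct_sub]
  · intro x hx
    simp [hAB x hx]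

theorem setIntegral_dotProduct_mulVec_nonneg (hs : MeasurableSet s)
    (hA : ∀ x, (A x).PosSemidef) : 0 ≤ ∫ x in s, u x ⬝ᵥ A x *ᵥ u x ∂μ :=
  setIntegral_nonneg hs fun x _ => by simpa using (hA x).dotProduct_mulVec_nonneg (u x)

theorem setIntegral_dotProduct_mulVec_le (hs : MeasurableSet s) {Λ : ℝ}
    (hΛ : ∀ x ∈ s, ∀ X : ι → ℝ, X ⬝ᵥ A x *ᵥ X ≤ Λ * (X ⬝ᵥ X))
    (hA : IntegrableOn (fun x => u x ⬝ᵥ A x *ᵥ u x) s μ)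
    (hu : IntegrableOn (fun x => u x ⬝ᵥ u x) s μ) :
    ∫ x in s, u x ⬝ᵥ A x *ᵥ u x ∂μ ≤ Λ * ∫ x in s, u x ⬝ᵥ u x ∂μ := by
  rw [← integral_const_mul]
  exact setIntegral_mono_on hA (hu.const_mul Λ) hs fun x hx => hΛ x hx (u x)

end QuadraticFormIntegrals

theorem energy_upper_bound_general (n : ℕ)
    (Ω D : Set (Fin n → ℝ)) (hΩ : MeasurableSet Ω) (hD : MeasurableSet D)
    (hDΩ : D ⊆ Ω)
    (B₀ B₁ : (Fin n → ℝ) → Matrix (Fin n ⊕ Fin n) (Fin n ⊕ Fin n) ℝ)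
    (hB₁symm : ∀ x, (B₁ x).IsSymm)
    (hB₁pos : ∀ x, (B₁ x).PosSemidef)
    (hsupp : ∀ x ∈ Ω \ D, B₁ x = B₀ x)
    (v₀ v₁ : (Fin n → ℝ) → (Fin n ⊕ Fin n) → ℝ)
    (h00 : IntegrableOn (fun x => v₀ x ⬝ᵥ (B₀ x).mulVec (v₀ x)) Ω)
    (h11 : IntegrableOn (fun x => v₁ x ⬝ᵥ (B₁ x).mulVec (v₁ x)) Ω)
    (h10 : IntegrableOn (fun x => v₀ x ⬝ᵥ (B₁ x).mulVec (v₁ x)) Ω)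
    (h100 : IntegrableOn (fun x => v₀ x ⬝ᵥ (B₁ x).mulVec (v₀ x)) Ω)
    (hv0sq : IntegrableOn (fun x => v₀ x ⬝ᵥ v₀ x) D)
    (W : ℝ)
    (hid₂ : (∫ x in Ω, v₁ x ⬝ᵥ (B₁ x).mulVec (v₁ x))
        - 2 * (∫ x in Ω, v₀ x ⬝ᵥ (B₁ x).mulVec (v₁ x))
        + (∫ x in Ω, v₀ x ⬝ᵥ (B₀ x).mulVec (v₀ x)) = -W) :
    W = -(∫ x in Ω, (v₀ x - v₁ x) ⬝ᵥ (B₁ x).mulVec (v₀ x - v₁ x))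
        + ∫ x in D, v₀ x ⬝ᵥ ((B₁ x) - (B₀ x)).mulVec (v₀ x) ∧
    W ≤ ∫ x in D, v₀ x ⬝ᵥ ((B₁ x) - (B₀ x)).mulVec (v₀ x) ∧
    ∀ Λ : ℝ, (∀ x ∈ D, ∀ X : Fin n ⊕ Fin n → ℝ,
        X ⬝ᵥ ((B₁ x) - (B₀ x)).mulVec X ≤ Λ * (X ⬝ᵥ X)) →
      W ≤ Λ * ∫ x in D, v₀ x ⬝ᵥ v₀ x := by
  have hexpand := setIntegral_dotProduct_mulVec_sub hB₁symm h100 h10 h11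
  have hgap := setIntegral_dotProduct_sub_mulVec_of_eqOn_sdiff hΩ hDΩ hsupp h100 h00
  have hnonneg := setIntegral_dotProduct_mulVec_nonneg (μ := volume) (u := fun x => v₀ x - v₁ x)
    hΩ hB₁pos
  have hW : W = -(∫ x in Ω, (v₀ x - v₁ x) ⬝ᵥ (B₁ x).mulVec (v₀ x - v₁ x))
      + ∫ x in D, v₀ x ⬝ᵥ ((B₁ x) - (B₀ x)).mulVec (v₀ x) := by
    rw [hexpand, hgap]
    linarith [hid₂]
  refine ⟨hW, by linarith, fun Λ hΛ => ?_⟩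
  have hgapD : IntegrableOn (fun x => v₀ x ⬝ᵥ (B₁ x - B₀ x) *ᵥ v₀ x) D := by
    convert (h100.sub h00).mono_set hDΩ using 1
    ext x
    simp only [Pi.sub_apply, sub_mulVec, dotProduct_sub]
  linarith [setIntegral_dotProduct_mulVec_le hD hΛ hgapD hv0sq]

/-- Upper-bound half of the energy inequality: under the two integration-by-parts
identities, the power gap `W` equals
`−∫_Ω B₁(v₀−v₁)·(v₀−v₁) + ∫_D (B₁−B₀)v₀·v₀`, hence `W ≤ ∫_D (B₁−B₀)v₀·v₀`, and
if `B₁−B₀ ≤ ΛI` a.e. on `D` then `W ≤ Λ∫_D |v₀|²`. -/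
theorem energy_upper_bound (n : ℕ)
    (Ω D : Set (Fin n → ℝ)) (hΩ : MeasurableSet Ω) (hD : MeasurableSet D)
    (hDΩ : D ⊆ Ω)
    (B₀ B₁ : (Fin n → ℝ) → Matrix (Fin n ⊕ Fin n) (Fin n ⊕ Fin n) ℝ)
    (hB₀symm : ∀ x, (B₀ x).IsSymm) (hB₁symm : ∀ x, (B₁ x).IsSymm)
    (hB₁pos : ∀ x, (B₁ x).PosSemidef)
    (hsupp : ∀ x ∈ Ω \ D, B₁ x = B₀ x)
    (v₀ v₁ : (Fin n → ℝ) → (Fin n ⊕ Fin n) → ℝ)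
    (h00 : IntegrableOn (fun x => v₀ x ⬝ᵥ (B₀ x).mulVec (v₀ x)) Ω)
    (h11 : IntegrableOn (fun x => v₁ x ⬝ᵥ (B₁ x).mulVec (v₁ x)) Ω)
    (h10 : IntegrableOn (fun x => v₀ x ⬝ᵥ (B₁ x).mulVec (v₁ x)) Ω)
    (h100 : IntegrableOn (fun x => v₀ x ⬝ᵥ (B₁ x).mulVec (v₀ x)) Ω)
    (h01 : IntegrableOn (fun x => v₁ x ⬝ᵥ (B₀ x).mulVec (v₀ x)) Ω)
    (hv0sq : IntegrableOn (fun x => v₀ x ⬝ᵥ v₀ x) D)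
    (W : ℝ)
    (hid₁ : (∫ x in Ω, v₀ x ⬝ᵥ (B₀ x).mulVec (v₀ x))
        - 2 * (∫ x in Ω, v₁ x ⬝ᵥ (B₀ x).mulVec (v₀ x))
        + (∫ x in Ω, v₁ x ⬝ᵥ (B₁ x).mulVec (v₁ x)) = W)
    (hid₂ : (∫ x in Ω, v₁ x ⬝ᵥ (B₁ x).mulVec (v₁ x))
        - 2 * (∫ x in Ω, v₀ x ⬝ᵥ (B₁ x).mulVec (v₁ x))
        + (∫ x in Ω, v₀ x ⬝ᵥ (B₀ x).mulVec (v₀ x)) = -W) :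
    W = -(∫ x in Ω, (v₀ x - v₁ x) ⬝ᵥ (B₁ x).mulVec (v₀ x - v₁ x))
        + ∫ x in D, v₀ x ⬝ᵥ ((B₁ x) - (B₀ x)).mulVec (v₀ x) ∧
    W ≤ ∫ x in D, v₀ x ⬝ᵥ ((B₁ x) - (B₀ x)).mulVec (v₀ x) ∧
    ∀ Λ : ℝ, (∀ x ∈ D, ∀ X : Fin n ⊕ Fin n → ℝ,
        X ⬝ᵥ ((B₁ x) - (B₀ x)).mulVec X ≤ Λ * (X ⬝ᵥ X)) →
      W ≤ Λ * ∫ x in D, v₀ x ⬝ᵥ v₀ x :=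
  energy_upper_bound_general n Ω D hΩ hD hDΩ B₀ B₁ hB₁symm hB₁pos hsupp v₀ v₁ h00 h11 h10 h100 hv0sq
    W hid₂
end
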